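/- Let F ⊆ ℝ be closed and define f : [0,∞) → [−∞,0] by f(γ) = −inf_{a∈F} ℓ(γ;a) (with inf over the empty set equal to ∞). Then: (i) if F ⊆ (−∞,0), then f(γ) = −∞ for all γ ≥ 0; (ii) if F ∩ [0,∞) ≠ ∅, then f is real-valued and continuous on (0,∞), and f(γ) → f(0) as γ ↓ 0, where f(0) = 0 if 0 ∈ F and f(0) = −∞ if 0 ∉ F; (iii) in any case, for all real numbers a, b with a ≤ b ≤ 0, the set f⁻¹([a,b]) is a closed subset of [0,∞). -/

import Mathlib

open MeasureTheory Set
open scoped ENNReal NNReal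

/-- The Fenchel-Legendre transform of the Poisson cumulant generating function
with parameter `γ ∈ [0,∞)`, evaluated at `a ∈ ℝ`. -/
noncomputable def ell (γ a : ℝ) : ℝ≥0∞ :=
  if a < 0 then ⊤
  else if a = 0 then ENNReal.ofReal γ
  else if γ = 0 then ⊤
  else ENNReal.ofReal (γ - a + a * Real.log (a / γ))

/-!
For `γ > 0` and `a ≥ 0` one has `ℓ(γ;a) = γ + (a log a - a) - a log γ`, so
`inf_{a ∈ F} ℓ(γ;a) = γ + φ(log γ)` with `φ(t) = inf_{a ∈ F ∩ [0,∞)} (a log a - a - a t)`.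
By the Fenchel–Young inequality `a t ≤ eᵗ + a log a - a` this infimum of affine functions is
bounded below by `-eᵗ`, so `φ` is a finite concave function on `ℝ`, hence continuous.
As `γ ↓ 0`: if `0 ∈ F` the infimum lies in `[0, γ]`; otherwise `F ∩ [0,∞) ⊆ [c,∞)` for some
`c > 0`, and `φ(t) ≥ -1 - c t → ∞` as `t → -∞`. Either way the limit is the value at `γ = 0`,
so `γ ↦ inf_{a ∈ F} ℓ(γ;a)` is continuous on `[0,∞)` as an `EReal`-valued map, and (iii) is
the closedness of a preimage of a closed interval.
-/

open Filter Topology Real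

theorem ConcaveOn.ciInf {E ι : Type*} [AddCommMonoid E] [Module ℝ E] [Nonempty ι] {s : Set E}
    {f : ι → E → ℝ} (hf : ∀ i, ConcaveOn ℝ s (f i))
    (hbdd : ∀ x ∈ s, BddBelow (range fun i => f i x)) :
    ConcaveOn ℝ s fun x => ⨅ i, f i x := by
  refine ⟨(hf (Classical.arbitrary ι)).1, fun x hx y hy μ ν hμ hν hμν => le_ciInf fun i => ?_⟩
  calc μ • (⨅ i, f i x) + ν • ⨅ i, f i y ≤ μ • f i x + ν • f i y := by
        gcongr
        exacts [ciInf_le (hbdd x hx) i, ciInf_le (hbdd y hy) i]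
    _ ≤ f i (μ • x + ν • y) := (hf i).2 hx hy hμ hν hμν

theorem mul_le_exp_add_mul_log_sub {a : ℝ} (ha : 0 ≤ a) (t : ℝ) :
    a * t ≤ exp t + (a * log a - a) := by
  rcases ha.eq_or_lt with rfl | ha
  · simpa using (exp_pos t).le
  have := add_one_le_exp (t - log a)
  rw [exp_sub, exp_log ha, le_div_iff₀ ha] at this
  linarith

noncomputable def legendreInf (C : Set ℝ) (t : ℝ) : ℝ :=
  ⨅ a : C, ((a : ℝ) * log a - a - a * t)

section legendreInf

variable {C : Set ℝ}

theorem bddBelow_range_mul_log_sub (hC : C ⊆ Ici 0) (t : ℝ) :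
    BddBelow (range fun a : C => (a : ℝ) * log a - a - a * t) :=
  ⟨-exp t, by
    rintro _ ⟨a, rfl⟩
    linarith [mul_le_exp_add_mul_log_sub (hC a.2) t]⟩

theorem legendreInf_le (hC : C ⊆ Ici 0) {a : ℝ} (ha : a ∈ C) (t : ℝ) :
    legendreInf C t ≤ a * log a - a - a * t :=
  ciInf_le (bddBelow_range_mul_log_sub hC t) ⟨a, ha⟩

theorem neg_exp_le_legendreInf (hne : C.Nonempty) (hC : C ⊆ Ici 0) (t : ℝ) :
    -exp t ≤ legendreInf C t :=
  have := hne.to_subtype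
  le_ciInf fun a => by linarith [mul_le_exp_add_mul_log_sub (hC a.2) t]

theorem continuous_legendreInf (hne : C.Nonempty) (hC : C ⊆ Ici 0) :
    Continuous (legendreInf C) := by
  have := hne.to_subtype
  have hconc : ConcaveOn ℝ univ (legendreInf C) :=
    ConcaveOn.ciInf (fun a => ⟨convex_univ, fun x _ y _ μ ν _ _ hμν => le_of_eq <| by
      simp only [smul_eq_mul]; linear_combination (a * log a - a : ℝ) * hμν⟩)
      fun t _ => bddBelow_range_mul_log_sub hC t
  exact continuousOn_univ.mp (hconc.continuousOn isOpen_univ)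

theorem tendsto_legendreInf_atBot (hne : C.Nonempty) {c : ℝ} (hc : 0 < c) (hC : C ⊆ Ici c) :
    Tendsto (legendreInf C) atBot atTop := by
  have := hne.to_subtype
  have hbound : ∀ t ≤ 0, -1 + c * -t ≤ legendreInf C t := fun t ht => le_ciInf fun a => by
    have hca : c ≤ a := hC a.2
    have hFY := mul_le_exp_add_mul_log_sub (hc.le.trans hca) 0
    rw [mul_zero, exp_zero] at hFY
    linarith [mul_le_mul_of_nonneg_right hca (neg_nonneg.mpr ht)]
  refine tendsto_atTop_mono' _ ?_
    (tendsto_atTop_add_const_left _ (-1) (tendsto_neg_atBot_atTop.const_mul_atTop hc))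
  filter_upwards [eventually_le_atBot 0] with t ht using hbound t ht

end legendreInf

theorem IsClosed.exists_pos_subset_Ici {C : Set ℝ} (hC : IsClosed C) (hC0 : C ⊆ Ici 0)
    (h0 : (0 : ℝ) ∉ C) : ∃ c > 0, C ⊆ Ici c := by
  obtain ⟨ε, hε, hball⟩ := Metric.isOpen_iff.mp hC.isOpen_compl 0 h0
  refine ⟨ε, hε, fun a ha => mem_Ici.mpr <| not_lt.mp fun haε => hball ?_ ha⟩
  rwa [Metric.mem_ball, Real.dist_eq, sub_zero, abs_of_nonneg (hC0 ha)]

theorem ell_of_neg {γ a : ℝ} (ha : a < 0) : ell γ a = ⊤ := by simp [ell, ha]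

theorem coe_ell_eq {γ a : ℝ} (hγ : 0 < γ) (ha : 0 ≤ a) :
    (ell γ a : EReal) = ((γ + (a * log a - a - a * log γ) : ℝ) : EReal) := by
  have hnonneg : 0 ≤ γ + (a * log a - a - a * log γ) := by
    linarith [mul_le_exp_add_mul_log_sub ha (log γ), exp_log hγ]
  suffices ell γ a = ENNReal.ofReal (γ + (a * log a - a - a * log γ)) by
    rw [this, EReal.coe_ennreal_ofReal, max_eq_left hnonneg]
  rcases ha.eq_or_lt with rfl | ha
  · simp [ell]
  · simp only [ell, not_lt.mpr ha.le, ha.ne', hγ.ne', if_false, log_div ha.ne' hγ.ne']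
    ring_nf

noncomputable def infEll (F : Set ℝ) (γ : ℝ) : EReal := ⨅ a ∈ F, (ell γ a : EReal)

section infEll

variable {F : Set ℝ}

theorem infEll_eq_biInf_inter_Ici (γ : ℝ) :
    infEll F γ = ⨅ a ∈ F ∩ Ici 0, (ell γ a : EReal) :=
  le_antisymm (biInf_mono inter_subset_left) <| le_iInf₂ fun a ha => by
    by_cases h : 0 ≤ a
    · exact iInf₂_le a ⟨ha, h⟩
    · simp [ell_of_neg (not_le.mp h)]

theorem infEll_of_subset_Iio (hF : F ⊆ Iio 0) (γ : ℝ) : infEll F γ = ⊤ := by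
  have hempty : F ∩ Ici 0 = ∅ :=
    eq_empty_of_forall_notMem fun a ha => (mem_Iio.mp (hF ha.1)).not_ge ha.2
  rw [infEll_eq_biInf_inter_Ici, hempty, iInf_emptyset]

theorem infEll_eq_coe (hC : (F ∩ Ici 0).Nonempty) {γ : ℝ} (hγ : 0 < γ) :
    infEll F γ = ((γ + legendreInf (F ∩ Ici 0) (log γ) : ℝ) : EReal) := by
  have := hC.to_subtype
  rw [infEll_eq_biInf_inter_Ici, iInf_subtype']
  calc ⨅ a : ↥(F ∩ Ici 0), (ell γ a : EReal)
      = ⨅ a : ↥(F ∩ Ici 0), (fun x : ℝ => ((γ + x : ℝ) : EReal)) (a * log a - a - a * log γ) :=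
        iInf_congr fun a => coe_ell_eq hγ a.2.2
    _ = _ := (Monotone.map_ciInf_of_continuousAt
        (continuous_coe_real_ereal.comp (continuous_const_add γ)).continuousAt
        (fun x y h => EReal.coe_le_coe_iff.mpr (by linarith))
        (bddBelow_range_mul_log_sub inter_subset_right _)).symm

open Classical in
theorem infEll_zero : infEll F 0 = if (0 : ℝ) ∈ F then 0 else ⊤ := by
  have hell : ∀ a, (ell 0 a : EReal) = if a = 0 then 0 else ⊤ := by
    intro a; unfold ell; split_ifs <;> simp_all
  split_ifs with h0
  · exact le_antisymm ((iInf₂_le 0 h0).trans (by simp [hell]))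
      (le_iInf₂ fun a _ => EReal.coe_ennreal_nonneg _)
  · exact eq_top_iff.mpr <| le_iInf₂ fun a ha => by rw [hell, if_neg (ne_of_mem_of_not_mem ha h0)]

theorem tendsto_infEll_nhdsGT_zero (hF : IsClosed F) (hC : (F ∩ Ici 0).Nonempty) :
    Tendsto (infEll F) (𝓝[>] 0) (𝓝 (infEll F 0)) := by
  set C := F ∩ Ici 0
  have hC0 : C ⊆ Ici 0 := inter_subset_right
  have heq : (fun γ => ((γ + legendreInf C (log γ) : ℝ) : EReal)) =ᶠ[𝓝[>] 0] infEll F :=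
    eventually_mem_nhdsWithin.mono fun γ hγ => (infEll_eq_coe hC hγ).symm
  have hid : Tendsto (fun γ : ℝ => γ) (𝓝[>] 0) (𝓝 0) := tendsto_id.mono_left nhdsWithin_le_nhds
  refine Tendsto.congr' heq ?_
  rw [infEll_zero]
  split_ifs with h0
  · refine EReal.tendsto_coe.mpr (tendsto_of_tendsto_of_tendsto_of_le_of_le' tendsto_const_nhds
      hid ?_ ?_)
    all_goals filter_upwards [self_mem_nhdsWithin] with γ hγ
    · linarith [neg_exp_le_legendreInf hC hC0 (log γ), exp_log hγ]
    · simpa using legendreInf_le hC0 ⟨h0, self_mem_Ici⟩ (log γ)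
  · obtain ⟨c, hc, hCc⟩ := (hF.inter isClosed_Ici).exists_pos_subset_Ici hC0 fun h => h0 h.1
    exact EReal.tendsto_coe_nhds_top_iff.mpr
      (hid.add_atTop ((tendsto_legendreInf_atBot hC hc hCc).comp tendsto_log_nhdsGT_zero))

theorem continuousOn_infEll (hF : IsClosed F) : ContinuousOn (infEll F) (Ici 0) := by
  by_cases hF0 : F ⊆ Iio 0
  · rw [funext (infEll_of_subset_Iio hF0)]
    exact continuousOn_const
  have hC : (F ∩ Ici 0).Nonempty :=
    let ⟨a, ha, h⟩ := not_subset.mp hF0; ⟨a, ha, mem_Ici.mpr (not_lt.mp h)⟩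
  have hpos : ContinuousOn (infEll F) (Ioi 0) :=
    ContinuousOn.congr (f := fun γ => ((γ + legendreInf (F ∩ Ici 0) (log γ) : ℝ) : EReal))
      (continuous_coe_real_ereal.comp_continuousOn (continuousOn_id.add
        ((continuous_legendreInf hC inter_subset_right).comp_continuousOn
          (continuousOn_log.mono fun γ hγ => ne_of_gt hγ))))
      fun γ hγ => infEll_eq_coe hC hγ
  rw [← Ioi_insert]
  rintro γ (rfl | hγ)
  · exact continuousWithinAt_insert_self.mpr (tendsto_infEll_nhdsGT_zero hF hC)
  · exact ((hpos γ hγ).continuousAt (Ioi_mem_nhds hγ)).continuousWithinAt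

end infEll

open Classical in
theorem stmt16 (F : Set ℝ) (hF : IsClosed F) :
    (F ⊆ Set.Iio 0 → ∀ γ : ℝ, 0 ≤ γ → -(⨅ a ∈ F, (ell γ a : EReal)) = ⊥) ∧
    ((F ∩ Set.Ici 0).Nonempty →
      (∀ γ : ℝ, 0 < γ → ∃ r : ℝ, -(⨅ a ∈ F, (ell γ a : EReal)) = (r : EReal)) ∧
      ContinuousOn (fun γ : ℝ => -(⨅ a ∈ F, (ell γ a : EReal))) (Set.Ioi 0) ∧
      Filter.Tendsto (fun γ : ℝ => -(⨅ a ∈ F, (ell γ a : EReal)))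
        (nhdsWithin 0 (Set.Ioi 0))
        (nhds (if 0 ∈ F then (0 : EReal) else ⊥))) ∧
    (∀ a b : ℝ, a ≤ b → b ≤ 0 →
      IsClosed {γ : ℝ | 0 ≤ γ ∧
        -(⨅ x ∈ F, (ell γ x : EReal)) ∈ Set.Icc (a : EReal) (b : EReal)}) := by
  have hcont : ContinuousOn (fun γ => -infEll F γ) (Ici 0) :=
    continuous_neg.comp_continuousOn (continuousOn_infEll hF)
  refine ⟨fun hF0 γ _ => ?_, fun hC => ⟨fun γ hγ => ?_, hcont.mono Ioi_subset_Ici_self, ?_⟩,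
    fun a b _ _ => hcont.preimage_isClosed_of_isClosed isClosed_Ici isClosed_Icc⟩
  · change -infEll F γ = ⊥
    rw [infEll_of_subset_Iio hF0, EReal.neg_top]
  · change ∃ r : ℝ, -infEll F γ = r
    exact ⟨_, by rw [infEll_eq_coe hC hγ, EReal.coe_neg]⟩
  · have := (hcont 0 self_mem_Ici).tendsto.mono_left (nhdsWithin_mono _ Ioi_subset_Ici_self)
    rwa [infEll_zero, apply_ite Neg.neg, neg_zero, EReal.neg_top] at this
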